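/- arXiv:1304.0630 — 3 statements merged into one kernel-verified Lean document; each statement's English description precedes it below -/
import Mathlib

section
/- Let ψ: ℝⁿ → ℝ ∪ {+∞} be an essentially-continuous convex function. Fix a unit vector θ ∈ ℝⁿ and let H = θ^⊥ be the hyperplane orthogonal to θ. Then for (n−1)-dimensional Hausdorff-almost every y ∈ H, the function t ↦ ψ(y + tθ) from ℝ to ℝ ∪ {+∞} is continuous on all of ℝ, and is locally Lipschitz on the interior of the interval on which it is finite. -/
open MeasureTheory Filter
open scoped ENNReal Topology

noncomputable section

/-- Convexity for `EReal`-valued functions on `ℝⁿ`. -/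
def ERealConvexOn {n : ℕ} (ψ : EuclideanSpace ℝ (Fin n) → EReal) : Prop :=
  ∀ x y : EuclideanSpace ℝ (Fin n), ∀ a b : ℝ, 0 ≤ a → 0 ≤ b → a + b = 1 →
    ψ (a • x + b • y) ≤ (a : EReal) * ψ x + (b : EReal) * ψ y

/-- A convex function `ψ : ℝⁿ → ℝ ∪ {+∞}` is essentially-continuous if it is lower
semi-continuous and its set of discontinuity points has zero `(n-1)`-dimensional
Hausdorff measure. -/
def EssentiallyContinuous {n : ℕ} (ψ : EuclideanSpace ℝ (Fin n) → EReal) : Prop :=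
  LowerSemicontinuous ψ ∧
    μH[(n : ℝ) - 1] {x : EuclideanSpace ℝ (Fin n) | ¬ ContinuousAt ψ x} = 0

/-- The measure with density `e^{-ψ}` with respect to Lebesgue measure. -/
def expMeasure {n : ℕ} (ψ : EuclideanSpace ℝ (Fin n) → EReal) :
    Measure (EuclideanSpace ℝ (Fin n)) :=
  volume.withDensity fun x => (-ψ x).exp

/-- `μ` is the moment measure of `ψ` : the push-forward of `e^{-ψ(x)} dx` under the
(a.e.-defined) gradient map `x ↦ ∇ψ(x)`. -/
def IsMomentMeasure {n : ℕ} (ψ : EuclideanSpace ℝ (Fin n) → EReal)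
    (μ : Measure (EuclideanSpace ℝ (Fin n))) : Prop :=
  ∃ g : EuclideanSpace ℝ (Fin n) → EuclideanSpace ℝ (Fin n),
    AEMeasurable g (expMeasure ψ) ∧
      (∀ᵐ x ∂(expMeasure ψ), HasGradientAt (fun y => (ψ y).toReal) (g x) x) ∧
      μ = (expMeasure ψ).map g

/-- The Legendre transform of `f : ℝⁿ → ℝ ∪ {±∞}`:
`f*(y) = sup { ⟨x,y⟩ - f x : f x < +∞ }`. -/
def legendre {n : ℕ} (f : EuclideanSpace ℝ (Fin n) → EReal) :
    EuclideanSpace ℝ (Fin n) → EReal :=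
  fun y => ⨆ x ∈ {x : EuclideanSpace ℝ (Fin n) | f x ≠ ⊤},
    ((inner ℝ x y : ℝ) : EReal) - f x

/-- Integrability of an `EReal`-valued function: a.e. finite with integrable real part. -/
def ERealIntegrable {n : ℕ} (φ : EuclideanSpace ℝ (Fin n) → EReal)
    (μ : Measure (EuclideanSpace ℝ (Fin n))) : Prop :=
  (∀ᵐ x ∂μ, φ x ≠ ⊤ ∧ φ x ≠ ⊥) ∧ Integrable (fun x => (φ x).toReal) μ

/-- The support of a Borel measure: points all of whose open neighborhoods have
positive measure. -/
def measureSupport {n : ℕ} (μ : Measure (EuclideanSpace ℝ (Fin n))) :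
    Set (EuclideanSpace ℝ (Fin n)) :=
  {x | ∀ U : Set (EuclideanSpace ℝ (Fin n)), IsOpen U → x ∈ U → 0 < μ U}

/-- The nonnegative part of an extended real, as an extended nonnegative real. -/
def ERealPos (x : EReal) : ℝ≥0∞ := if x = ⊤ then ⊤ else ENNReal.ofReal x.toReal

end

/-!
Restricted to a line, `ψ` is still convex, so the real part of a slice is convex on the interval
where the slice is finite and therefore locally Lipschitz in its interior. Hence a slice can only
fail by being discontinuous, which forces `ψ` to be discontinuous at some point `y + tθ` of the
line; for `y ⊥ θ` that point projects orthogonally onto `y`. So the bad `y` lie in the image of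
the discontinuity set of `ψ` under the orthogonal projection onto `θ^⊥`, and this Lipschitz map
sends `H^{n-1}`-null sets to `H^{n-1}`-null sets.
-/

open Set
open scoped InnerProductSpace

/-- `ERealConvexOn`, for functions on an arbitrary real vector space. -/
def ERealConvex {E : Type*} [AddCommGroup E] [Module ℝ E] (f : E → EReal) : Prop :=
  ∀ x y : E, ∀ a b : ℝ, 0 ≤ a → 0 ≤ b → a + b = 1 →
    f (a • x + b • y) ≤ (a : EReal) * f x + (b : EReal) * f y

namespace ERealConvex

variable {E : Type*} [AddCommGroup E] [Module ℝ E] {f : E → EReal}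

theorem comp_line (hf : ERealConvex f) (y v : E) : ERealConvex fun t : ℝ => f (y + t • v) := by
  intro s t a b ha hb hab
  have hcomb : y + (a • s + b • t) • v = a • (y + s • v) + b • (y + t • v) := by
    rw [smul_add, smul_add, add_add_add_comm, Convex.combo_self hab, add_smul, smul_smul,
      smul_smul, smul_eq_mul, smul_eq_mul]
  simpa only [hcomb] using hf (y + s • v) (y + t • v) a b ha hb hab

theorem apply_combo_le_coe_toReal (hf : ERealConvex f) (hbot : ∀ x, f x ≠ ⊥) {x y : E}
    (hx : f x ≠ ⊤) (hy : f y ≠ ⊤) {a b : ℝ} (ha : 0 ≤ a) (hb : 0 ≤ b)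
    (hab : a + b = 1) :
    f (a • x + b • y) ≤ ((a * (f x).toReal + b * (f y).toReal : ℝ) : EReal) := by
  have h := hf x y a b ha hb hab
  rwa [← EReal.coe_toReal hx (hbot x), ← EReal.coe_toReal hy (hbot y), ← EReal.coe_mul,
    ← EReal.coe_mul, ← EReal.coe_add] at h

theorem convexOn_toReal (hf : ERealConvex f) (hbot : ∀ x, f x ≠ ⊥) :
    ConvexOn ℝ {x | f x ≠ ⊤} fun x => (f x).toReal := by
  have hdom : Convex ℝ {x | f x ≠ ⊤} := fun x hx y hy a b ha hb hab =>
    ne_top_of_le_ne_top (EReal.coe_ne_top _)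
      (hf.apply_combo_le_coe_toReal hbot hx hy ha hb hab)
  refine ⟨hdom, fun x hx y hy a b ha hb hab => ?_⟩
  have h := hf.apply_combo_le_coe_toReal hbot hx hy ha hb hab
  simpa only [smul_eq_mul, EReal.toReal_coe] using
    EReal.toReal_le_toReal h (hbot _) (EReal.coe_ne_top _)

end ERealConvex

theorem MeasureTheory.Measure.eq_empty_of_hausdorffMeasure_eq_zero_of_neg
    {X : Type*} [EMetricSpace X] [MeasurableSpace X] [BorelSpace X] {d : ℝ} (hd : d < 0)
    {s : Set X} (hs : μH[d] s = 0) : s = ∅ := by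
  refine eq_empty_of_forall_notMem fun x hx => ?_
  have h := (hausdorffMeasure_mono hd.le {x}).trans (measure_mono (singleton_subset_iff.2 hx))
  rw [hausdorffMeasure_zero_singleton, hs] at h
  exact one_ne_zero (nonpos_iff_eq_zero.1 h)

theorem LipschitzWith.hausdorffMeasure_image_null {X Y : Type*} [EMetricSpace X]
    [MeasurableSpace X] [BorelSpace X] [EMetricSpace Y] [MeasurableSpace Y] [BorelSpace Y]
    {K : NNReal} {f : X → Y} (hf : LipschitzWith K f) {d : ℝ} {s : Set X} (hs : μH[d] s = 0) :
    μH[d] (f '' s) = 0 := by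
  rcases lt_or_ge d 0 with hd | hd
  · rw [Measure.eq_empty_of_hausdorffMeasure_eq_zero_of_neg hd hs, image_empty, measure_empty]
  · refine nonpos_iff_eq_zero.1 ((hf.hausdorffMeasure_image_le hd s).trans_eq ?_)
    rw [hs, mul_zero]

theorem Submodule.starProjection_orthogonal_singleton_add_smul {E : Type*}
    [NormedAddCommGroup E] [InnerProductSpace ℝ E] {y v : E} (hy : ⟪y, v⟫_ℝ = 0) (t : ℝ) :
    (ℝ ∙ v)ᗮ.starProjection (y + t • v) = y := by
  have hy' : y ∈ (ℝ ∙ v)ᗮ := Submodule.mem_orthogonal_singleton_iff_inner_left.2 hy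
  rw [map_add, map_smul, starProjection_orthogonalComplement_singleton_eq_zero, smul_zero,
    add_zero, starProjection_eq_self_iff.2 hy']

theorem essentially_continuous_slices_general {n : ℕ}
    (ψ : EuclideanSpace ℝ (Fin n) → EReal) (hbot : ∀ x, ψ x ≠ ⊥)
    (hconv : ERealConvexOn ψ) (hec : EssentiallyContinuous ψ)
    (θ : EuclideanSpace ℝ (Fin n)) :
    μH[(n : ℝ) - 1] {y : EuclideanSpace ℝ (Fin n) | (inner ℝ y θ : ℝ) = 0 ∧
      ¬ (Continuous (fun t : ℝ => ψ (y + t • θ)) ∧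
        LocallyLipschitzOn (interior {t : ℝ | ψ (y + t • θ) ≠ ⊤})
          (fun t : ℝ => (ψ (y + t • θ)).toReal))} = 0 := by
  set P := (ℝ ∙ θ)ᗮ.starProjection
  refine measure_mono_null ?_ (P.lipschitz.hausdorffMeasure_image_null hec.2)
  rintro y ⟨hyθ, hbad⟩
  by_contra hyD
  have hline (t : ℝ) : ContinuousAt ψ (y + t • θ) := by
    by_contra ht
    exact hyD ⟨y + t • θ, ht, Submodule.starProjection_orthogonal_singleton_add_smul hyθ t⟩
  refine hbad ⟨continuous_iff_continuousAt.2 fun t =>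
    (hline t).comp (f := fun s : ℝ => y + s • θ) (by fun_prop), ?_⟩
  exact ((ERealConvex.comp_line hconv y θ).convexOn_toReal fun _ => hbot _)
    |>.locallyLipschitzOn_interior

/-- for an essentially-continuous convex function `ψ` and a unit vector `θ`,
for `H^{n-1}`-almost every `y` in the hyperplane `θ^⊥`, the function `t ↦ ψ(y + tθ)` is
continuous on `ℝ` and locally Lipschitz in the interior of the interval where it is finite. -/
theorem essentially_continuous_slices {n : ℕ}
    (ψ : EuclideanSpace ℝ (Fin n) → EReal) (hbot : ∀ x, ψ x ≠ ⊥)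
    (hconv : ERealConvexOn ψ) (hec : EssentiallyContinuous ψ)
    (θ : EuclideanSpace ℝ (Fin n)) (hθ : ‖θ‖ = 1) :
    μH[(n : ℝ) - 1] {y : EuclideanSpace ℝ (Fin n) | (inner ℝ y θ : ℝ) = 0 ∧
      ¬ (Continuous (fun t : ℝ => ψ (y + t • θ)) ∧
        LocallyLipschitzOn (interior {t : ℝ | ψ (y + t • θ) ≠ ⊤})
          (fun t : ℝ => (ψ (y + t • θ)).toReal))} = 0 :=
  essentially_continuous_slices_general ψ hbot hconv hec θ
end

section
/- Let ψ: ℝⁿ → ℝ ∪ {+∞} be a convex function with 0 < ∫ e^{-ψ} < +∞. Then ψ is integrable with respect to the measure μ_ψ with density e^{-ψ}: one has −∞ < ∫_{ℝⁿ} ψ(x) e^{-ψ(x)} dx ≤ 2 ∫_{ℝⁿ} e^{-ψ(x)/2} dx < +∞; in particular ∫_{ℝⁿ} |ψ(x)| e^{-ψ(x)} dx < +∞. -/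
open MeasureTheory Filter
open scoped ENNReal Topology

/-!
Midpoint convexity gives `e^{-ψ(x)/2} e^{-ψ(y)/2} ≤ e^{-ψ((x+y)/2)}`; integrating in `x` and
substituting `z = (x+y)/2` yields `e^{-ψ(y)/2} ∫ e^{-ψ/2} ≤ 2ⁿ ∫ e^{-ψ}` for every `y`. Choosing
`y` with `ψ(y) < ∞` shows `∫ e^{-ψ/2} < ∞`; as this integral is positive, the same inequality
bounds `e^{-ψ/2}` uniformly, i.e. `ψ` is bounded below. The elementary bounds
`t e^{-t} ≤ 2 e^{-t/2}` and `|t| e^{-t} ≤ 2 e^{-t/2} (1 + e^{-t})` then conclude.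
-/

theorem EReal.neg_add_neg_le_neg_add (u v : EReal) : -u + -v ≤ -(u + v) := by
  induction u <;> induction v
  case coe.coe u v => exact_mod_cast (_root_.neg_add u v).ge
  all_goals simp

theorem EReal.exp_half_mul_exp_half (z : EReal) :
    EReal.exp ((2⁻¹ : ℝ) * z) * EReal.exp ((2⁻¹ : ℝ) * z) = EReal.exp z := by
  rw [← EReal.exp_add, ← EReal.right_distrib_of_nonneg (by norm_num) (by norm_num),
    ← EReal.coe_add]
  norm_num

namespace Real

theorem mul_exp_neg_le (t : ℝ) : t * exp (-t) ≤ 2 * exp (2⁻¹ * -t) := by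
  have hhalf : t / 2 * exp (2⁻¹ * -t) ≤ 1 :=
    calc t / 2 * exp (2⁻¹ * -t) ≤ exp (t / 2) * exp (2⁻¹ * -t) := by
          gcongr; linarith [add_one_le_exp (t / 2)]
      _ = 1 := by rw [← exp_add, ← exp_zero]; ring_nf
  calc t * exp (-t) = 2 * (t / 2 * exp (2⁻¹ * -t)) * exp (2⁻¹ * -t) := by
        rw [mul_assoc, mul_assoc, ← exp_add]; ring_nf
    _ ≤ 2 * 1 * exp (2⁻¹ * -t) := by gcongr
    _ = 2 * exp (2⁻¹ * -t) := by ring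

theorem abs_mul_exp_neg_le (t : ℝ) :
    |t| * exp (-t) ≤ 2 * exp (2⁻¹ * -t) * (1 + exp (-t)) := by
  rcases le_or_gt 0 t with ht | ht
  · rw [abs_of_nonneg ht]
    nlinarith [mul_exp_neg_le t, exp_pos (2⁻¹ * -t), exp_pos (-t)]
  · have habs : |t| ≤ 2 * exp (2⁻¹ * -t) := by
      rw [abs_of_neg ht]; linarith [add_one_le_exp (2⁻¹ * -t)]
    calc |t| * exp (-t) ≤ 2 * exp (2⁻¹ * -t) * exp (-t) := by gcongr
      _ ≤ 2 * exp (2⁻¹ * -t) * (1 + exp (-t)) := by gcongr; linarith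

end Real

theorem lintegral_comp_smul_add {E : Type*} [NormedAddCommGroup E] [NormedSpace ℝ E]
    [MeasurableSpace E] [BorelSpace E] [FiniteDimensional ℝ E] (μ : Measure E)
    [μ.IsAddHaarMeasure] (g : E → ℝ≥0∞) {r : ℝ} (hr : r ≠ 0) (b : E) :
    ∫⁻ x, g (r • x + b) ∂μ = ENNReal.ofReal |(r ^ Module.finrank ℝ E)⁻¹| * ∫⁻ x, g x ∂μ := by
  calc ∫⁻ x, g (r • x + b) ∂μ = ∫⁻ y, g (y + b) ∂μ.map (r • ·) :=
        (lintegral_map_equiv (fun y => g (y + b))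
          (Homeomorph.smulOfNeZero r hr).toMeasurableEquiv).symm
    _ = _ := by
      rw [Measure.map_addHaar_smul μ hr, lintegral_smul_measure, lintegral_add_right_eq_self,
        smul_eq_mul]

namespace EReal

theorem toReal_mul_exp_neg_le (z : EReal) :
    z.toReal * (exp (-z)).toReal ≤ 2 * (exp ((2⁻¹ : ℝ) * -z)).toReal := by
  induction z
  case coe t =>
    rw [← coe_neg, ← coe_mul, exp_coe, exp_coe, ENNReal.toReal_ofReal (Real.exp_nonneg _),
      ENNReal.toReal_ofReal (Real.exp_nonneg _)]
    exact Real.mul_exp_neg_le t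
  all_goals simp

theorem abs_toReal_mul_exp_neg_le (z : EReal) :
    |z.toReal| * (exp (-z)).toReal ≤
      2 * (exp ((2⁻¹ : ℝ) * -z)).toReal * (1 + (exp (-z)).toReal) := by
  induction z
  case coe t =>
    rw [← coe_neg, ← coe_mul, exp_coe, exp_coe, ENNReal.toReal_ofReal (Real.exp_nonneg _),
      ENNReal.toReal_ofReal (Real.exp_nonneg _)]
    exact Real.abs_mul_exp_neg_le t
  all_goals simp

end EReal

section Density

open EReal

variable {α : Type*} [MeasurableSpace α] {μ : Measure α} {φ : α → EReal}

theorem lintegral_exp_half_neg_pos (hφ : AEMeasurable φ μ) (h : 0 < ∫⁻ x, exp (-φ x) ∂μ) :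
    0 < ∫⁻ x, exp ((2⁻¹ : ℝ) * -φ x) ∂μ := by
  refine pos_iff_ne_zero.mpr fun hzero => h.ne' ?_
  have hE : (fun x => exp ((2⁻¹ : ℝ) * -φ x)) =ᵐ[μ] 0 :=
    (lintegral_eq_zero_iff' (by fun_prop)).mp hzero
  calc ∫⁻ x, exp (-φ x) ∂μ = ∫⁻ x, exp ((2⁻¹ : ℝ) * -φ x) * exp ((2⁻¹ : ℝ) * -φ x) ∂μ := by
        simp only [exp_half_mul_exp_half]
    _ = ∫⁻ _, 0 ∂μ := lintegral_congr_ae <| by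
        filter_upwards [hE] with x hx
        rw [hx, Pi.zero_apply, zero_mul]
    _ = 0 := lintegral_zero

theorem integrable_toReal_mul_exp_neg (hφ : AEMeasurable φ μ)
    (hF : ∫⁻ x, exp (-φ x) ∂μ ≠ ⊤) (hE : ∫⁻ x, exp ((2⁻¹ : ℝ) * -φ x) ∂μ ≠ ⊤)
    {C : ℝ≥0∞} (hC : C ≠ ⊤) (hEC : ∀ x, exp ((2⁻¹ : ℝ) * -φ x) ≤ C) :
    Integrable (fun x => (φ x).toReal * (exp (-φ x)).toReal) μ := by
  have hEm : AEMeasurable (fun x => exp ((2⁻¹ : ℝ) * -φ x)) μ := by fun_prop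
  have hFm : AEMeasurable (fun x => exp (-φ x)) μ := by fun_prop
  have hbound : Integrable (fun x => 2 * (exp ((2⁻¹ : ℝ) * -φ x)).toReal +
      2 * C.toReal * (exp (-φ x)).toReal) μ :=
    ((integrable_toReal_of_lintegral_ne_top hEm hE).const_mul 2).add
      ((integrable_toReal_of_lintegral_ne_top hFm hF).const_mul _)
  refine hbound.mono' (hφ.ereal_toReal.mul hFm.ennreal_toReal).aestronglyMeasurable
    (ae_of_all _ fun x => ?_)
  have hEC' := ENNReal.toReal_mono hC (hEC x)
  rw [norm_mul, Real.norm_eq_abs, Real.norm_eq_abs, ENNReal.abs_toReal]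
  nlinarith [abs_toReal_mul_exp_neg_le (φ x), ENNReal.toReal_nonneg (a := exp (-φ x))]

theorem integral_toReal_mul_exp_neg_le (hφ : AEMeasurable φ μ)
    (hint : Integrable (fun x => (φ x).toReal * (exp (-φ x)).toReal) μ)
    (hE : ∫⁻ x, exp ((2⁻¹ : ℝ) * -φ x) ∂μ ≠ ⊤) :
    ∫ x, (φ x).toReal * (exp (-φ x)).toReal ∂μ ≤
      2 * (∫⁻ x, exp ((2⁻¹ : ℝ) * -φ x) ∂μ).toReal := by
  have hEm : AEMeasurable (fun x => exp ((2⁻¹ : ℝ) * -φ x)) μ := by fun_prop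
  calc ∫ x, (φ x).toReal * (exp (-φ x)).toReal ∂μ
      ≤ ∫ x, 2 * (exp ((2⁻¹ : ℝ) * -φ x)).toReal ∂μ :=
        integral_mono hint ((integrable_toReal_of_lintegral_ne_top hEm hE).const_mul 2)
          fun x => toReal_mul_exp_neg_le (φ x)
    _ = 2 * (∫⁻ x, exp ((2⁻¹ : ℝ) * -φ x) ∂μ).toReal := by
        rw [integral_const_mul, integral_toReal hEm (ae_lt_top' hEm hE)]

end Density

namespace ERealConvexOn

variable {n : ℕ} {ψ : EuclideanSpace ℝ (Fin n) → EReal}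

theorem convex_le (hψ : ERealConvexOn ψ) (c : EReal) : Convex ℝ {x | ψ x ≤ c} := by
  intro x hx y hy a b ha hb hab
  calc ψ (a • x + b • y) ≤ a * ψ x + b * ψ y := hψ x y a b ha hb hab
    _ ≤ a * c + b * c := add_le_add (mul_le_mul_of_nonneg_left hx (EReal.coe_nonneg.mpr ha))
        (mul_le_mul_of_nonneg_left hy (EReal.coe_nonneg.mpr hb))
    _ = c := by
      rw [← EReal.right_distrib_of_nonneg (EReal.coe_nonneg.mpr ha) (EReal.coe_nonneg.mpr hb),
        ← EReal.coe_add, hab, EReal.coe_one, one_mul]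

theorem aemeasurable (hψ : ERealConvexOn ψ) : AEMeasurable ψ volume :=
  NullMeasurable.aemeasurable <| measurable_of_Iic (δ := NullMeasurableSpace _ volume)
    fun c => (hψ.convex_le c).nullMeasurableSet (μ := volume)

theorem exp_half_neg_mul_exp_half_neg_le (hψ : ERealConvexOn ψ)
    (x y : EuclideanSpace ℝ (Fin n)) :
    EReal.exp ((2⁻¹ : ℝ) * -ψ x) * EReal.exp ((2⁻¹ : ℝ) * -ψ y) ≤
      EReal.exp (-ψ ((2⁻¹ : ℝ) • x + (2⁻¹ : ℝ) • y)) := by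
  rw [← EReal.exp_add]
  refine EReal.exp_monotone ?_
  calc (2⁻¹ : ℝ) * -ψ x + (2⁻¹ : ℝ) * -ψ y = -((2⁻¹ : ℝ) * ψ x) + -((2⁻¹ : ℝ) * ψ y) := by
        rw [mul_neg, mul_neg]
    _ ≤ -((2⁻¹ : ℝ) * ψ x + (2⁻¹ : ℝ) * ψ y) := EReal.neg_add_neg_le_neg_add _ _
    _ ≤ -ψ ((2⁻¹ : ℝ) • x + (2⁻¹ : ℝ) • y) :=
        EReal.neg_le_neg_iff.mpr (hψ x y _ _ (by norm_num) (by norm_num) (by norm_num))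

theorem exp_half_neg_mul_lintegral_le (hψ : ERealConvexOn ψ) (y : EuclideanSpace ℝ (Fin n)) :
    EReal.exp ((2⁻¹ : ℝ) * -ψ y) * ∫⁻ x, EReal.exp ((2⁻¹ : ℝ) * -ψ x) ≤
      2 ^ n * ∫⁻ x, EReal.exp (-ψ x) :=
  calc EReal.exp ((2⁻¹ : ℝ) * -ψ y) * ∫⁻ x, EReal.exp ((2⁻¹ : ℝ) * -ψ x)
      ≤ ∫⁻ x, EReal.exp ((2⁻¹ : ℝ) * -ψ x) * EReal.exp ((2⁻¹ : ℝ) * -ψ y) := by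
        rw [mul_comm]; exact lintegral_mul_const_le _ _
    _ ≤ ∫⁻ x, EReal.exp (-ψ ((2⁻¹ : ℝ) • x + (2⁻¹ : ℝ) • y)) :=
        lintegral_mono fun x => hψ.exp_half_neg_mul_exp_half_neg_le x y
    _ = 2 ^ n * ∫⁻ x, EReal.exp (-ψ x) := by
        rw [lintegral_comp_smul_add (volume : Measure (EuclideanSpace ℝ (Fin n)))
          (fun z => EReal.exp (-ψ z)) (by norm_num), finrank_euclideanSpace_fin]
        simp

end ERealConvexOn

theorem psi_exp_neg_psi_integrable_general {n : ℕ}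
    (ψ : EuclideanSpace ℝ (Fin n) → EReal)
    (hconv : ERealConvexOn ψ)
    (h0 : 0 < ∫⁻ x, (-ψ x).exp) (h1 : (∫⁻ x, (-ψ x).exp) < ⊤) :
    MeasureTheory.Integrable
      (fun x => (ψ x).toReal * ((-ψ x).exp).toReal) MeasureTheory.volume ∧
    (∫⁻ x, ((((2:ℝ)⁻¹ : EReal)) * (-ψ x)).exp) < ⊤ ∧
    (∫ x, (ψ x).toReal * ((-ψ x).exp).toReal)
      ≤ 2 * (∫⁻ x, ((((2:ℝ)⁻¹ : EReal)) * (-ψ x)).exp).toReal ∧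
    MeasureTheory.Integrable
      (fun x => |(ψ x).toReal| * ((-ψ x).exp).toReal) MeasureTheory.volume := by
  have hψ := hconv.aemeasurable
  have hJ0 := lintegral_exp_half_neg_pos hψ h0
  have hK : 2 ^ n * ∫⁻ x, (-ψ x).exp ≠ ⊤ := ENNReal.mul_ne_top (by simp) h1.ne
  obtain ⟨x₀, hx₀⟩ : ∃ x₀, EReal.exp ((2⁻¹ : ℝ) * -ψ x₀) ≠ 0 := by
    by_contra! h
    simp only [h, lintegral_zero, lt_self_iff_false] at hJ0
  have hJ : (∫⁻ x, EReal.exp ((2⁻¹ : ℝ) * -ψ x)) < ⊤ :=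
    ENNReal.lt_top_of_mul_ne_top_right
      (ne_top_of_le_ne_top hK (hconv.exp_half_neg_mul_lintegral_le x₀)) hx₀
  have hbdd : ∀ y, EReal.exp ((2⁻¹ : ℝ) * -ψ y) ≤
      (2 ^ n * ∫⁻ x, (-ψ x).exp) / ∫⁻ x, EReal.exp ((2⁻¹ : ℝ) * -ψ x) := fun y =>
    (ENNReal.le_div_iff_mul_le (.inl hJ0.ne') (.inl hJ.ne)).mpr
      (hconv.exp_half_neg_mul_lintegral_le y)
  have hint := integrable_toReal_mul_exp_neg hψ h1.ne hJ.ne (ENNReal.div_ne_top hK hJ0.ne') hbdd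
  refine ⟨hint, hJ, integral_toReal_mul_exp_neg_le hψ hint hJ.ne, ?_⟩
  simpa only [abs_mul, ENNReal.abs_toReal] using hint.abs

/-- for a convex `ψ` with `0 < ∫ e^{-ψ} < ∞`, the function `ψ e^{-ψ}` is
integrable, `-∞ < ∫ ψ e^{-ψ} ≤ 2 ∫ e^{-ψ/2} < +∞`, and `∫ |ψ| e^{-ψ} < ∞`. -/
theorem psi_exp_neg_psi_integrable {n : ℕ}
    (ψ : EuclideanSpace ℝ (Fin n) → EReal) (hbot : ∀ x, ψ x ≠ ⊥)
    (hconv : ERealConvexOn ψ)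
    (h0 : 0 < ∫⁻ x, (-ψ x).exp) (h1 : (∫⁻ x, (-ψ x).exp) < ⊤) :
    MeasureTheory.Integrable
      (fun x => (ψ x).toReal * ((-ψ x).exp).toReal) MeasureTheory.volume ∧
    (∫⁻ x, ((((2:ℝ)⁻¹ : EReal)) * (-ψ x)).exp) < ⊤ ∧
    (∫ x, (ψ x).toReal * ((-ψ x).exp).toReal)
      ≤ 2 * (∫⁻ x, ((((2:ℝ)⁻¹ : EReal)) * (-ψ x)).exp).toReal ∧
    MeasureTheory.Integrable
      (fun x => |(ψ x).toReal| * ((-ψ x).exp).toReal) MeasureTheory.volume :=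
  psi_exp_neg_psi_integrable_general ψ hconv h0 h1
end

section
/- Let μ be a finite Borel measure on ℝⁿ and let K be the interior of the convex hull of the support of μ. If x₀ ∈ K, then there exists a constant C_{μ,x₀} > 0 with the following property: for every non-negative, μ-integrable convex function φ: ℝⁿ → ℝ ∪ {+∞}, one has φ(x₀) ≤ C_{μ,x₀} ∫_{ℝⁿ} φ dμ. -/
open MeasureTheory Filter
open scoped ENNReal Topology

/-! If `M < φ x₀`, the sublevel set `{φ < M}` is convex and misses `x₀`, so a nonzero functional
`f` separates them and `φ ≥ M` on the open half-space `{f x₀ < f x}`. Each such half-space contains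
a point of the support of `μ`, since `x₀` is interior to its convex hull, hence has positive
measure. This measure is lower semicontinuous in `f`, so by compactness of the unit sphere of the
dual it is bounded below by a uniform `ε > 0`, and Markov's inequality gives `M ε ≤ ∫ φ dμ`. -/

theorem exists_apply_lt_of_mem_interior_convexHull {E : Type*} [AddCommGroup E]
    [TopologicalSpace E] [IsTopologicalAddGroup E] [Module ℝ E] [ContinuousSMul ℝ E]
    {s : Set E} {x₀ : E}
    (hx₀ : x₀ ∈ interior (convexHull ℝ s)) {f : StrongDual ℝ E} (hf : f ≠ 0) :
    ∃ x ∈ s, f x₀ < f x := by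
  by_contra! h
  have hsub : convexHull ℝ s ⊆ f ⁻¹' Set.Iic (f x₀) :=
    convexHull_min h ((convex_Iic _).linear_preimage f.toLinearMap)
  have := interior_mono hsub hx₀
  rw [← (f.isOpenMap_of_ne_zero hf).preimage_interior_eq_interior_preimage f.continuous,
    interior_Iic] at this
  exact lt_irrefl (f x₀) this

section Separation

variable {E : Type*} [NormedAddCommGroup E] [NormedSpace ℝ E] [FiniteDimensional ℝ E]

theorem exists_ne_zero_forall_apply_eq_of_affineSpan_ne_top {S : Set E} (hne : S.Nonempty)
    (hS : affineSpan ℝ S ≠ ⊤) :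
    ∃ f : StrongDual ℝ E, f ≠ 0 ∧ ∀ a ∈ S, ∀ b ∈ S, f a = f b := by
  obtain ⟨p, hp⟩ := hne
  have hdir : (affineSpan ℝ S).direction < ⊤ := by
    rw [lt_top_iff_ne_top, Ne, AffineSubspace.direction_eq_top_iff_of_nonempty
      ⟨p, subset_affineSpan ℝ S hp⟩]
    exact hS
  obtain ⟨g, hg, hker⟩ := Submodule.exists_le_ker_of_lt_top _ hdir
  refine ⟨LinearMap.toContinuousLinearMap g, by simpa using hg, fun a ha b hb => ?_⟩
  have hab : a - b ∈ LinearMap.ker g :=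
    hker (AffineSubspace.vsub_mem_direction (subset_affineSpan ℝ S ha) (subset_affineSpan ℝ S hb))
  simpa [sub_eq_zero] using hab

theorem Convex.exists_ne_zero_forall_apply_le {S : Set E} (hS : Convex ℝ S) (hne : S.Nonempty)
    {x : E} (hx : x ∉ S) : ∃ f : StrongDual ℝ E, f ≠ 0 ∧ ∀ a ∈ S, f a ≤ f x := by
  by_cases hint : (interior S).Nonempty
  · exact geometric_hahn_banach_of_nonempty_interior_point hS (fun h => hx (interior_subset h))
      hint
  obtain ⟨f, hf, hconst⟩ := exists_ne_zero_forall_apply_eq_of_affineSpan_ne_top hne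
    (mt hS.interior_nonempty_iff_affineSpan_eq_top.2 hint)
  obtain ⟨p, hp⟩ := hne
  rcases le_total (f p) (f x) with hpx | hxp
  · exact ⟨f, hf, fun a ha => (hconst a ha p hp).trans_le hpx⟩
  · refine ⟨-f, neg_ne_zero.2 hf, fun a ha => ?_⟩
    simpa [hconst a ha p hp] using hxp

end Separation

section Halfspaces

variable {E : Type*} [NormedAddCommGroup E] [NormedSpace ℝ E] [MeasurableSpace E]
  (μ : Measure E) (x₀ : E)

theorem lowerSemicontinuous_measure_setOf_apply_lt :
    LowerSemicontinuous fun f : StrongDual ℝ E => μ {x | f x₀ < f x} := by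
  intro f y hy
  -- `A N` stays inside the half-space of every functional within `1 / (N + 1)` of `f`.
  set A : ℕ → Set E := fun N => {x | (N + 1 : ℝ)⁻¹ * ‖x - x₀‖ < f x - f x₀}
  have hA : Monotone A := by
    intro N M hNM x hx
    refine lt_of_le_of_lt (mul_le_mul_of_nonneg_right ?_ (norm_nonneg _)) hx
    gcongr
  have hAunion : ⋃ N, A N = {x | f x₀ < f x} := by
    ext x
    simp only [A, Set.mem_iUnion, Set.mem_ofPred_eq]
    constructor
    · rintro ⟨N, hN⟩
      have : 0 ≤ (N + 1 : ℝ)⁻¹ * ‖x - x₀‖ := by positivity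
      linarith
    · intro hx
      have hlim := (tendsto_inv_atTop_nhds_zero_nat (𝕜 := ℝ)).comp (tendsto_add_atTop_nat 1)
      have := ((hlim.mul_const ‖x - x₀‖).eventually_lt_const
        (by simpa using sub_pos.2 hx : (0 : ℝ) * ‖x - x₀‖ < f x - f x₀)).exists
      simpa using this
  obtain ⟨N, hN⟩ := ((tendsto_measure_iUnion_atTop hA).eventually_const_lt
    (by rwa [hAunion])).exists
  filter_upwards [Metric.ball_mem_nhds f (inv_pos.2 (Nat.cast_add_one_pos N))] with g hg
  refine hN.trans_le (measure_mono fun x hx => ?_)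
  have hgf : ‖(g - f) (x - x₀)‖ ≤ (N + 1 : ℝ)⁻¹ * ‖x - x₀‖ :=
    ((g - f).le_opNorm _).trans (mul_le_mul_of_nonneg_right (mem_ball_iff_norm.1 hg).le
      (norm_nonneg _))
  simp only [Set.mem_ofPred_eq, A, sub_apply, map_sub, Real.norm_eq_abs] at hx hgf ⊢
  linarith [neg_abs_le (g x - f x - (g x₀ - f x₀))]

theorem exists_pos_forall_le_measure_setOf_apply_lt [FiniteDimensional ℝ E]
    (h : ∀ f : StrongDual ℝ E, f ≠ 0 → 0 < μ {x | f x₀ < f x}) :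
    ∃ ε : ℝ≥0∞, 0 < ε ∧ ∀ f : StrongDual ℝ E, f ≠ 0 → ε ≤ μ {x | f x₀ < f x} := by
  have hunit : ∀ f : StrongDual ℝ E, f ≠ 0 → ‖f‖⁻¹ • f ∈ Metric.sphere 0 1 := fun f hf => by
    simp [norm_smul, norm_ne_zero_iff.2 hf]
  rcases (Metric.sphere (0 : StrongDual ℝ E) 1).eq_empty_or_nonempty with hempty | hne
  · exact ⟨1, one_pos, fun f hf => by simpa [hempty] using hunit f hf⟩
  obtain ⟨f₀, hf₀, hmin⟩ := ((lowerSemicontinuous_measure_setOf_apply_lt μ x₀).lowerSemicontinuousOn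
    _).exists_isMinOn hne (isCompact_sphere 0 1)
  refine ⟨_, h f₀ (ne_zero_of_mem_unit_sphere ⟨f₀, hf₀⟩), fun f hf => ?_⟩
  have hscale : {x | (‖f‖⁻¹ • f) x₀ < (‖f‖⁻¹ • f) x} = {x | f x₀ < f x} := by
    ext x
    simp [inv_pos.2 (norm_pos_iff.2 hf)]
  exact hscale ▸ hmin (hunit f hf)

end Halfspaces

theorem measure_setOf_apply_lt_pos {n : ℕ} {μ : Measure (EuclideanSpace ℝ (Fin n))}
    {x₀ : EuclideanSpace ℝ (Fin n)} (hx₀ : x₀ ∈ interior (convexHull ℝ (measureSupport μ)))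
    {f : StrongDual ℝ (EuclideanSpace ℝ (Fin n))} (hf : f ≠ 0) :
    0 < μ {x | f x₀ < f x} := by
  obtain ⟨x, hx, hlt⟩ := exists_apply_lt_of_mem_interior_convexHull hx₀ hf
  exact hx _ (isOpen_lt continuous_const f.continuous) hlt

theorem exists_pos_forall_le_measure_compl_of_convex {n : ℕ}
    {μ : Measure (EuclideanSpace ℝ (Fin n))} {x₀ : EuclideanSpace ℝ (Fin n)}
    (hx₀ : x₀ ∈ interior (convexHull ℝ (measureSupport μ))) :
    ∃ ε : ℝ, 0 < ε ∧ ∀ S : Set (EuclideanSpace ℝ (Fin n)), Convex ℝ S → x₀ ∉ S →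
      ENNReal.ofReal ε ≤ μ Sᶜ := by
  obtain ⟨δ, hδ, hδle⟩ := exists_pos_forall_le_measure_setOf_apply_lt μ x₀
    fun f hf => measure_setOf_apply_lt_pos hx₀ hf
  obtain ⟨p, hp⟩ : (measureSupport μ).Nonempty := by
    by_contra! h
    simp [h] at hx₀
  have hμ : 0 < μ Set.univ := hp _ isOpen_univ trivial
  obtain ⟨ε, -, hε, hεle⟩ := ENNReal.lt_iff_exists_real_btwn.1 (lt_min hδ hμ)
  refine ⟨ε, ENNReal.ofReal_pos.1 hε, fun S hS hx₀S => hεle.le.trans ?_⟩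
  rcases S.eq_empty_or_nonempty with rfl | hne
  · simp
  obtain ⟨f, hf, hfS⟩ := hS.exists_ne_zero_forall_apply_le hne hx₀S
  exact (min_le_left _ _).trans <| (hδle f hf).trans <| measure_mono fun x hx hxS =>
    (hfS x hxS).not_gt hx

theorem ERealConvexOn.convex_setOf_lt {n : ℕ} {φ : EuclideanSpace ℝ (Fin n) → EReal}
    (hφ : ERealConvexOn φ) (M : EReal) : Convex ℝ {x | φ x < M} := by
  intro x hx y hy a b ha hb hab
  have ha' : (0 : EReal) ≤ a := EReal.coe_nonneg.2 ha
  have hb' : (0 : EReal) ≤ b := EReal.coe_nonneg.2 hb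
  calc φ (a • x + b • y) ≤ a * φ x + b * φ y := hφ x y a b ha hb hab
    _ ≤ a * max (φ x) (φ y) + b * max (φ x) (φ y) := by
      gcongr
      · exact le_max_left _ _
      · exact le_max_right _ _
    _ = max (φ x) (φ y) := by
      rw [← EReal.right_distrib_of_nonneg ha' hb', ← EReal.coe_add, hab, EReal.coe_one, one_mul]
    _ < M := max_lt hx hy

theorem mul_le_integral_of_le_measure {α : Type*} [MeasurableSpace α] {μ : Measure α}
    {f : α → ℝ} (hf : Integrable f μ) (hf₀ : 0 ≤ᵐ[μ] f) {s : Set α} {M ε : ℝ} (hM : 0 ≤ M)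
    (hε : ENNReal.ofReal ε ≤ μ s) (hfs : ∀ᵐ x ∂μ, x ∈ s → M ≤ f x) :
    M * ε ≤ ∫ x, f x ∂μ := by
  have hs : μ s ≤ μ {x | ENNReal.ofReal M ≤ ENNReal.ofReal (f x)} :=
    measure_mono_ae <| hfs.mono fun x hx hxs => ENNReal.ofReal_le_ofReal (hx hxs)
  rw [← ENNReal.ofReal_le_ofReal_iff (integral_nonneg_of_ae hf₀), ENNReal.ofReal_mul hM,
    ofReal_integral_eq_lintegral_ofReal hf hf₀]
  calc ENNReal.ofReal M * ENNReal.ofReal ε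
      ≤ ENNReal.ofReal M * μ {x | ENNReal.ofReal M ≤ ENNReal.ofReal (f x)} := by
        gcongr; exact hε.trans hs
    _ ≤ ∫⁻ x, ENNReal.ofReal (f x) ∂μ :=
        mul_meas_ge_le_lintegral₀ hf.aestronglyMeasurable.aemeasurable.ennreal_ofReal _

theorem convex_function_bound_at_interior_point_general {n : ℕ}
    (μ : MeasureTheory.Measure (EuclideanSpace ℝ (Fin n)))
    (x₀ : EuclideanSpace ℝ (Fin n))
    (hx₀ : x₀ ∈ interior (convexHull ℝ (measureSupport μ))) :
    ∃ C : ℝ, 0 < C ∧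
      ∀ φ : EuclideanSpace ℝ (Fin n) → EReal, (∀ x, 0 ≤ φ x) → ERealConvexOn φ →
        ERealIntegrable φ μ →
        φ x₀ ≤ (((C * ∫ x, (φ x).toReal ∂μ) : ℝ) : EReal) := by
  obtain ⟨ε, hε, hcompl⟩ := exists_pos_forall_le_measure_compl_of_convex hx₀
  refine ⟨ε⁻¹, inv_pos.2 hε, fun φ hφ₀ hφ ⟨hfin, hint⟩ => ?_⟩
  have hφ₀' : ∀ x, 0 ≤ (φ x).toReal := fun x => EReal.toReal_nonneg (hφ₀ x)
  refine EReal.ge_of_forall_gt_iff_ge.1 fun M hM => EReal.coe_le_coe_iff.2 ?_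
  rcases lt_or_ge M 0 with hM₀ | hM₀
  · exact hM₀.le.trans (mul_nonneg (inv_nonneg.2 hε.le) (integral_nonneg hφ₀'))
  have hsublevel : ∀ᵐ x ∂μ, x ∈ {x | φ x < M}ᶜ → M ≤ (φ x).toReal := by
    filter_upwards [hfin] with x hx hxM
    simpa using EReal.toReal_le_toReal (not_lt.1 hxM) (EReal.coe_ne_bot M) hx.1
  have key := mul_le_integral_of_le_measure hint (ae_of_all _ hφ₀') hM₀
    (hcompl _ (hφ.convex_setOf_lt M) fun h => lt_asymm h hM) hsublevel
  rwa [inv_mul_eq_div, le_div_iff₀ hε]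

/-- if `x₀` lies in the interior of the convex hull of the support of a finite
Borel measure `μ`, then there is `C > 0` such that every non-negative `μ`-integrable convex
`φ` satisfies `φ(x₀) ≤ C ∫ φ dμ`. -/
theorem convex_function_bound_at_interior_point {n : ℕ}
    (μ : MeasureTheory.Measure (EuclideanSpace ℝ (Fin n)))
    (hfin : μ Set.univ < ⊤)
    (x₀ : EuclideanSpace ℝ (Fin n))
    (hx₀ : x₀ ∈ interior (convexHull ℝ (measureSupport μ))) :
    ∃ C : ℝ, 0 < C ∧
      ∀ φ : EuclideanSpace ℝ (Fin n) → EReal, (∀ x, 0 ≤ φ x) → ERealConvexOn φ →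
        ERealIntegrable φ μ →
        φ x₀ ≤ (((C * ∫ x, (φ x).toReal ∂μ) : ℝ) : EReal) :=
  convex_function_bound_at_interior_point_general μ x₀ hx₀
end
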